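/- Let α_sr, μ_sr, Ω_sr, α_rd, μ_rd, Ω_rd, η₁, η₂, K, a₂ all be positive reals. For ρ > 0 define Φ_max(ρ) = max(η₁/(ρK), η₂/(a₂ρ)), A(ρ) = γ(μ_sr, (μ_sr/Ω_sr^{α_sr})·Φ_max(ρ)^{α_sr/2})/Γ(μ_sr), B(ρ) = γ(μ_rd, (μ_rd/Ω_rd^{α_rd})·(η₂/ρ)^{α_rd/2})/Γ(μ_rd), and the outage probability P₂(ρ) = A(ρ) + B(ρ) − A(ρ)B(ρ). Then with d = (1/2)·min(α_sr μ_sr, α_rd μ_rd), there exists a constant C > 0 such that lim_{ρ→∞} ρ^d · P₂(ρ) = C. Hence the diversity order of symbol s₂ in CRS-NOMA is (1/2)·min(α_sr μ_sr, α_rd μ_rd). -/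

import Mathlib

/-! Near the origin `γ(s, x) ~ x^s / s`, since the factor `e^{-t}` of the integrand lies between
`e^{-x}` and `1`. Hence each α-μ CDF `F(c/ρ)` decays like a positive multiple of `ρ^{-αμ/2}`.
In `P₂ = A + B - AB` the product `AB` decays strictly faster than either factor, so `P₂` decays
at the slower of the two rates, and `ρ^d P₂(ρ)` converges to the sum of the limits of the terms
attaining `d`. -/

open Real Filter

/-- The lower incomplete Gamma function γ(s, x) = ∫₀ˣ t^{s−1} e^{−t} dt. -/
noncomputable def lowerGamma (s x : ℝ) : ℝ :=
  ∫ t in (0 : ℝ)..x, t ^ (s - 1) * Real.exp (-t)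

open Topology

/-- The α-μ fading CDF: `A(ρ)` and `B(ρ)` are its values at `Φ_max(ρ)` and `η₂ / ρ`. -/
noncomputable def alphaMuCDF (α μ Ω x : ℝ) : ℝ :=
  lowerGamma μ (μ / Ω ^ α * x ^ (α / 2)) / Real.Gamma μ

section LowerGamma

variable {s : ℝ}

lemma intervalIntegrable_lowerGamma_integrand (hs : 0 < s) (x : ℝ) :
    IntervalIntegrable (fun t => t ^ (s - 1) * exp (-t)) MeasureTheory.volume 0 x :=
  (intervalIntegral.intervalIntegrable_rpow' (by linarith)).mul_continuousOn
    (continuous_exp.comp continuous_neg).continuousOn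

lemma integral_rpow_sub_one (hs : 0 < s) (x : ℝ) :
    ∫ t in (0 : ℝ)..x, t ^ (s - 1) = x ^ s / s := by
  rw [integral_rpow (Or.inl (by linarith)), zero_rpow (by linarith : s - 1 + 1 ≠ 0)]
  ring_nf

lemma lowerGamma_le_rpow_div (hs : 0 < s) {x : ℝ} (hx : 0 ≤ x) :
    lowerGamma s x ≤ x ^ s / s := by
  rw [← integral_rpow_sub_one hs]
  refine intervalIntegral.integral_mono_on hx (intervalIntegrable_lowerGamma_integrand hs x)
    (intervalIntegral.intervalIntegrable_rpow' (by linarith)) fun t ht => ?_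
  exact mul_le_of_le_one_right (rpow_nonneg ht.1 _) (exp_le_one_iff.mpr (by linarith [ht.1]))

lemma exp_neg_mul_rpow_div_le_lowerGamma (hs : 0 < s) {x : ℝ} (hx : 0 ≤ x) :
    exp (-x) * (x ^ s / s) ≤ lowerGamma s x := by
  rw [← integral_rpow_sub_one hs, ← intervalIntegral.integral_const_mul]
  refine intervalIntegral.integral_mono_on hx
    ((intervalIntegral.intervalIntegrable_rpow' (by linarith)).const_mul _)
    (intervalIntegrable_lowerGamma_integrand hs x) fun t ht => ?_
  rw [mul_comm]
  exact mul_le_mul_of_nonneg_left (exp_le_exp.mpr (by linarith [ht.2])) (rpow_nonneg ht.1 _)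

lemma tendsto_rpow_neg_mul_lowerGamma_nhdsGT_zero (hs : 0 < s) :
    Tendsto (fun x => x ^ (-s) * lowerGamma s x) (𝓝[>] 0) (𝓝 (1 / s)) := by
  have hlower : Tendsto (fun x : ℝ => exp (-x) / s) (𝓝[>] 0) (𝓝 (1 / s)) := by
    have h := ((continuous_exp.comp continuous_neg).div_const s).tendsto (0 : ℝ)
    simp only [Function.comp_apply, neg_zero, exp_zero] at h
    exact h.mono_left nhdsWithin_le_nhds
  refine tendsto_of_tendsto_of_tendsto_of_le_of_le' hlower tendsto_const_nhds ?_ ?_ <;>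
    filter_upwards [self_mem_nhdsWithin] with x (hx : 0 < x) <;>
    rw [rpow_neg hx.le]
  · calc exp (-x) / s = (x ^ s)⁻¹ * (exp (-x) * (x ^ s / s)) := by
          field_simp
      _ ≤ (x ^ s)⁻¹ * lowerGamma s x :=
          mul_le_mul_of_nonneg_left (exp_neg_mul_rpow_div_le_lowerGamma hs hx.le) (by positivity)
  · calc (x ^ s)⁻¹ * lowerGamma s x ≤ (x ^ s)⁻¹ * (x ^ s / s) :=
          mul_le_mul_of_nonneg_left (lowerGamma_le_rpow_div hs hx.le) (by positivity)
      _ = 1 / s := by field_simp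

lemma tendsto_rpow_mul_lowerGamma_mul_rpow_neg {c e : ℝ} (hs : 0 < s) (hc : 0 < c)
    (he : 0 < e) :
    Tendsto (fun ρ : ℝ => ρ ^ (e * s) * lowerGamma s (c * ρ ^ (-e))) atTop (𝓝 (c ^ s / s)) := by
  have harg : Tendsto (fun ρ : ℝ => c * ρ ^ (-e)) atTop (𝓝[>] 0) := by
    refine tendsto_nhdsWithin_iff.mpr ⟨?_, ?_⟩
    · simpa using (tendsto_rpow_neg_atTop he).const_mul c
    · filter_upwards [eventually_gt_atTop 0] with ρ hρ
      exact mul_pos hc (rpow_pos_of_pos hρ _)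
  have h := ((tendsto_rpow_neg_mul_lowerGamma_nhdsGT_zero hs).comp harg).const_mul (c ^ s)
  rw [mul_one_div] at h
  refine h.congr' ?_
  filter_upwards [eventually_gt_atTop 0] with ρ hρ
  have hpow : (c * ρ ^ (-e)) ^ (-s) = (c ^ s)⁻¹ * ρ ^ (e * s) := by
    rw [mul_rpow hc.le (rpow_nonneg hρ.le _), ← rpow_mul hρ.le, rpow_neg hc.le]
    ring_nf
  simp only [Function.comp_apply, hpow]
  field_simp

end LowerGamma

lemma tendsto_alphaMuCDF_div {α μ Ω c : ℝ} (hα : 0 < α) (hμ : 0 < μ) (hΩ : 0 < Ω)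
    (hc : 0 < c) :
    Tendsto (fun ρ : ℝ => ρ ^ (α * μ / 2) * alphaMuCDF α μ Ω (c / ρ)) atTop
      (𝓝 ((μ / Ω ^ α * c ^ (α / 2)) ^ μ / μ / Real.Gamma μ)) := by
  have h := (tendsto_rpow_mul_lowerGamma_mul_rpow_neg hμ
    (by positivity : 0 < μ / Ω ^ α * c ^ (α / 2)) (half_pos hα)).div_const (Real.Gamma μ)
  refine h.congr' ?_
  filter_upwards [eventually_gt_atTop 0] with ρ hρ
  rw [alphaMuCDF, div_rpow hc.le hρ.le, rpow_neg hρ.le]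
  ring_nf

lemma tendsto_rpow_mul_of_le {f : ℝ → ℝ} {e e' L : ℝ}
    (h : Tendsto (fun ρ => ρ ^ e * f ρ) atTop (𝓝 L)) (hle : e' ≤ e) :
    Tendsto (fun ρ => ρ ^ e' * f ρ) atTop (𝓝 (if e' = e then L else 0)) := by
  rcases hle.eq_or_lt with rfl | hlt
  · simpa using h
  rw [if_neg hlt.ne]
  have h0 : Tendsto (fun ρ : ℝ => ρ ^ (e' - e)) atTop (𝓝 0) := by
    simpa [neg_sub] using tendsto_rpow_neg_atTop (sub_pos.mpr hlt)
  refine (zero_mul L ▸ h0.mul h).congr' ?_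
  filter_upwards [eventually_gt_atTop 0] with ρ hρ
  rw [← mul_assoc, ← rpow_add hρ, sub_add_cancel]

lemma exists_tendsto_rpow_min_mul_add_sub_mul {f g : ℝ → ℝ} {a b Lf Lg : ℝ} (hb : 0 < b)
    (hLf : 0 < Lf) (hLg : 0 < Lg) (hf : Tendsto (fun ρ => ρ ^ a * f ρ) atTop (𝓝 Lf))
    (hg : Tendsto (fun ρ => ρ ^ b * g ρ) atTop (𝓝 Lg)) :
    ∃ C, 0 < C ∧
      Tendsto (fun ρ => ρ ^ min a b * (f ρ + g ρ - f ρ * g ρ)) atTop (𝓝 C) := by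
  have hf' := tendsto_rpow_mul_of_le hf (min_le_left a b)
  have hg' := tendsto_rpow_mul_of_le hg (min_le_right a b)
  have hg0 : Tendsto g atTop (𝓝 0) := by
    simpa [hb.ne] using tendsto_rpow_mul_of_le hg hb.le
  refine ⟨(if min a b = a then Lf else 0) + (if min a b = b then Lg else 0), ?_, ?_⟩
  · rcases min_choice a b with hmin | hmin <;> simp only [hmin] <;> split_ifs <;> linarith
  · have h := (hf'.add hg').sub (hf'.mul hg0)
    rw [mul_zero, sub_zero] at h
    exact h.congr fun ρ => by ring

theorem noma_s2_diversity_order_general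
    (αsr μsr Ωsr αrd μrd Ωrd η₁ η₂ K a₂ : ℝ)
    (hαsr : 0 < αsr) (hμsr : 0 < μsr) (hΩsr : 0 < Ωsr)
    (hαrd : 0 < αrd) (hμrd : 0 < μrd) (hΩrd : 0 < Ωrd)
    (hη₂ : 0 < η₂) (ha₂ : 0 < a₂) :
    ∃ C : ℝ, 0 < C ∧
      Tendsto
        (fun ρ : ℝ =>
          ρ ^ ((1 / 2) * min (αsr * μsr) (αrd * μrd)) *
            ((lowerGamma μsr
                ((μsr / Ωsr ^ αsr) *
                  (max (η₁ / (ρ * K)) (η₂ / (a₂ * ρ))) ^ (αsr / 2)) /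
                Real.Gamma μsr) +
              (lowerGamma μrd ((μrd / Ωrd ^ αrd) * (η₂ / ρ) ^ (αrd / 2)) /
                Real.Gamma μrd) -
              (lowerGamma μsr
                ((μsr / Ωsr ^ αsr) *
                  (max (η₁ / (ρ * K)) (η₂ / (a₂ * ρ))) ^ (αsr / 2)) /
                Real.Gamma μsr) *
              (lowerGamma μrd ((μrd / Ωrd ^ αrd) * (η₂ / ρ) ^ (αrd / 2)) /
                Real.Gamma μrd)))
        atTop (nhds C) := by
  set Φ := max (η₁ / K) (η₂ / a₂)
  have hΦ : 0 < Φ := lt_max_of_lt_right (div_pos hη₂ ha₂)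
  obtain ⟨C, hC, hlim⟩ := exists_tendsto_rpow_min_mul_add_sub_mul (by positivity) (by positivity)
    (by positivity) (tendsto_alphaMuCDF_div hαsr hμsr hΩsr hΦ)
    (tendsto_alphaMuCDF_div hαrd hμrd hΩrd hη₂)
  refine ⟨C, hC, hlim.congr' ?_⟩
  filter_upwards [eventually_gt_atTop 0] with ρ hρ
  have hΦmax : max (η₁ / (ρ * K)) (η₂ / (a₂ * ρ)) = Φ / ρ := by
    rw [← max_div_div_right hρ.le, div_div, div_div, mul_comm K, mul_comm a₂]
  have hexp : min (αsr * μsr / 2) (αrd * μrd / 2) = 1 / 2 * min (αsr * μsr) (αrd * μrd) := by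
    rw [mul_min_of_nonneg _ _ (by norm_num : (0 : ℝ) ≤ 1 / 2)]
    ring_nf
  rw [hexp, hΦmax]
  rfl

/-- Diversity order of symbol s₂ in CRS-NOMA over α-μ fading:
with d = (1/2)·min(α_sr μ_sr, α_rd μ_rd), the outage probability
P₂(ρ) = A(ρ) + B(ρ) − A(ρ)B(ρ) satisfies ρ^d · P₂(ρ) → C for some constant C > 0. -/
theorem noma_s2_diversity_order
    (αsr μsr Ωsr αrd μrd Ωrd η₁ η₂ K a₂ : ℝ)
    (hαsr : 0 < αsr) (hμsr : 0 < μsr) (hΩsr : 0 < Ωsr)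
    (hαrd : 0 < αrd) (hμrd : 0 < μrd) (hΩrd : 0 < Ωrd)
    (hη₁ : 0 < η₁) (hη₂ : 0 < η₂) (hK : 0 < K) (ha₂ : 0 < a₂) :
    ∃ C : ℝ, 0 < C ∧
      Tendsto
        (fun ρ : ℝ =>
          ρ ^ ((1 / 2) * min (αsr * μsr) (αrd * μrd)) *
            ((lowerGamma μsr
                ((μsr / Ωsr ^ αsr) *
                  (max (η₁ / (ρ * K)) (η₂ / (a₂ * ρ))) ^ (αsr / 2)) /
                Real.Gamma μsr) +
              (lowerGamma μrd ((μrd / Ωrd ^ αrd) * (η₂ / ρ) ^ (αrd / 2)) /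
                Real.Gamma μrd) -
              (lowerGamma μsr
                ((μsr / Ωsr ^ αsr) *
                  (max (η₁ / (ρ * K)) (η₂ / (a₂ * ρ))) ^ (αsr / 2)) /
                Real.Gamma μsr) *
              (lowerGamma μrd ((μrd / Ωrd ^ αrd) * (η₂ / ρ) ^ (αrd / 2)) /
                Real.Gamma μrd)))
        atTop (nhds C) :=
  noma_s2_diversity_order_general αsr μsr Ωsr αrd μrd Ωrd η₁ η₂ K a₂ hαsr hμsr hΩsr hαrd hμrd hΩrd
    hη₂ ha₂
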